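/- arXiv:1710.05870 — 4 statements merged into one kernel-verified Lean document; each statement's English description precedes it below -/
import Mathlib

section
/- For C, D > 0, ∫₀^∞ t^{-1/4} / ((C+t)(D+t)) dt = π√2 / (C^{1/4} (√C + √D)(C^{1/4} + D^{1/4}) D^{1/4}). -/
/-!
The substitution `t = a x / (1 - x)` turns `∫₀^∞ t^(u-1) (a+t)^(-(u+v)) dt` into `a^(-v) B(u, v)`.
With `s = 3/4`, the reflection formula `Γ(s) Γ(1-s) = π / sin(π s) = π √2` gives
`∫₀^∞ t^(-1/4) / (a+t) dt = π √2 / a^(1/4)`, and also the value of `∫₀^∞ t^(-1/4) / (a+t)² dt`.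
For `C ≠ D` the theorem follows by partial fractions, for `C = D` from the second integral;
writing `C = c⁴`, `D = d⁴`, what remains is `d⁴ - c⁴ = (d - c)(d + c)(c² + d²)`.
-/

open Real MeasureTheory Set ProbabilityTheory

section

variable {a s u v x : ℝ}

theorem Complex.betaIntegral_ofReal (u v : ℝ) :
    Complex.betaIntegral u v = ↑(∫ x in (0:ℝ)..1, x ^ (u - 1) * (1 - x) ^ (v - 1)) := by
  rw [Complex.betaIntegral, ← intervalIntegral.integral_ofReal]
  refine intervalIntegral.integral_congr fun x hx ↦ ?_
  rw [uIcc_of_le zero_le_one] at hx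
  simp only [Complex.ofReal_mul, Complex.ofReal_cpow hx.1, Complex.ofReal_cpow (sub_nonneg.2 hx.2),
    Complex.ofReal_sub, Complex.ofReal_one]

theorem integral_rpow_mul_one_sub_rpow (hu : 0 < u) (hv : 0 < v) :
    ∫ x in (0:ℝ)..1, x ^ (u - 1) * (1 - x) ^ (v - 1) = beta u v := by
  rw [beta_eq_betaIntegralReal u v hu hv, Complex.betaIntegral_ofReal, Complex.ofReal_re]

theorem integrableOn_rpow_mul_one_sub_rpow (hu : 0 < u) (hv : 0 < v) :
    IntegrableOn (fun x : ℝ ↦ x ^ (u - 1) * (1 - x) ^ (v - 1)) (Ioo 0 1) :=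
  -- a non-integrable function has interval integral `0`, whereas `beta u v > 0`
  (intervalIntegral.intervalIntegrable_of_integral_ne_zero (by
    rw [integral_rpow_mul_one_sub_rpow hu hv]; exact (beta_pos hu hv).ne')).1.mono_set
    Ioo_subset_Ioc_self

theorem setIntegral_Ioo_rpow_mul_one_sub_rpow (hu : 0 < u) (hv : 0 < v) :
    ∫ x in Ioo (0:ℝ) 1, x ^ (u - 1) * (1 - x) ^ (v - 1) = beta u v := by
  rw [← integral_Ioc_eq_integral_Ioo, ← intervalIntegral.integral_of_le zero_le_one,
    integral_rpow_mul_one_sub_rpow hu hv]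

theorem image_mul_div_one_sub_Ioo (ha : 0 < a) :
    (fun x ↦ a * x / (1 - x)) '' Ioo 0 1 = Ioi 0 := by
  ext t
  constructor
  · rintro ⟨x, ⟨hx₀, hx₁⟩, rfl⟩
    exact div_pos (mul_pos ha hx₀) (sub_pos.2 hx₁)
  · intro (ht : 0 < t)
    refine ⟨t / (a + t), ⟨by positivity, (div_lt_one (by positivity)).2 (by linarith)⟩, ?_⟩
    beta_reduce
    rw [one_sub_div (by positivity : a + t ≠ 0), add_sub_cancel_right]
    field_simp

theorem injOn_mul_div_one_sub (ha : a ≠ 0) :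
    InjOn (fun x ↦ a * x / (1 - x)) (Ioo 0 1) := by
  rintro x ⟨-, hx⟩ y ⟨-, hy⟩ h
  rw [div_eq_div_iff (sub_pos.2 hx).ne' (sub_pos.2 hy).ne'] at h
  have : a * (x - y) = 0 := by linear_combination h
  simpa [ha, sub_eq_zero] using this

theorem hasDerivAt_mul_div_one_sub (a : ℝ) (hx : x ≠ 1) :
    HasDerivAt (fun x ↦ a * x / (1 - x)) (a / (1 - x) ^ 2) x := by
  refine (((hasDerivAt_id x).const_mul a).div ((hasDerivAt_id x).const_sub 1)
    (sub_ne_zero.2 hx.symm)).congr_deriv ?_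
  simp only [id]
  ring

theorem abs_div_one_sub_sq_mul_rpow_mul_add_rpow (ha : 0 < a) (hx : x ∈ Ioo 0 1) :
    |a / (1 - x) ^ 2| * ((a * x / (1 - x)) ^ (u - 1) * (a + a * x / (1 - x)) ^ (-(u + v)))
      = a ^ (-v) * (x ^ (u - 1) * (1 - x) ^ (v - 1)) := by
  obtain ⟨hx₀, hx₁⟩ := hx
  have hy : 0 < 1 - x := sub_pos.2 hx₁
  have hsum : a + a * x / (1 - x) = a / (1 - x) := by field_simp; ring
  rw [abs_of_pos (by positivity), hsum, div_rpow (by positivity) hy.le, div_rpow ha.le hy.le,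
    mul_rpow ha.le hx₀.le]
  simp only [rpow_sub_one ha.ne', rpow_sub_one hx₀.ne', rpow_sub_one hy.ne', rpow_neg ha.le,
    rpow_neg hy.le, rpow_add ha, rpow_add hy]
  field_simp

theorem integrableOn_Ioi_rpow_mul_add_rpow (ha : 0 < a) (hu : 0 < u) (hv : 0 < v) :
    IntegrableOn (fun t ↦ t ^ (u - 1) * (a + t) ^ (-(u + v))) (Ioi 0) := by
  rw [← image_mul_div_one_sub_Ioo ha, integrableOn_image_iff_integrableOn_abs_deriv_smul
    measurableSet_Ioo (fun x hx ↦ (hasDerivAt_mul_div_one_sub a hx.2.ne).hasDerivWithinAt)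
    (injOn_mul_div_one_sub ha.ne')]
  refine IntegrableOn.congr_fun ((integrableOn_rpow_mul_one_sub_rpow hu hv).const_mul (a ^ (-v)))
    (fun x hx ↦ ?_) measurableSet_Ioo
  rw [smul_eq_mul, abs_div_one_sub_sq_mul_rpow_mul_add_rpow ha hx]

theorem integral_Ioi_rpow_mul_add_rpow (ha : 0 < a) (hu : 0 < u) (hv : 0 < v) :
    ∫ t in Ioi 0, t ^ (u - 1) * (a + t) ^ (-(u + v)) = a ^ (-v) * beta u v := by
  rw [← image_mul_div_one_sub_Ioo ha, integral_image_eq_integral_abs_deriv_smul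
    measurableSet_Ioo (fun x hx ↦ (hasDerivAt_mul_div_one_sub a hx.2.ne).hasDerivWithinAt)
    (injOn_mul_div_one_sub ha.ne'),
    setIntegral_congr_fun measurableSet_Ioo fun x hx ↦ by
      rw [smul_eq_mul, abs_div_one_sub_sq_mul_rpow_mul_add_rpow ha hx],
    integral_const_mul, setIntegral_Ioo_rpow_mul_one_sub_rpow hu hv]

theorem integrableOn_Ioi_rpow_div_add (ha : 0 < a) (hs₀ : 0 < s) (hs₁ : s < 1) :
    IntegrableOn (fun t ↦ t ^ (s - 1) / (a + t)) (Ioi 0) := by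
  simpa only [add_sub_cancel, rpow_neg_one, div_eq_mul_inv]
    using integrableOn_Ioi_rpow_mul_add_rpow ha hs₀ (sub_pos.2 hs₁)

theorem integral_Ioi_rpow_div_add (ha : 0 < a) (hs₀ : 0 < s) (hs₁ : s < 1) :
    ∫ t in Ioi 0, t ^ (s - 1) / (a + t) = π / (sin (π * s) * a ^ (1 - s)) := by
  have h := integral_Ioi_rpow_mul_add_rpow ha hs₀ (sub_pos.2 hs₁)
  simp only [add_sub_cancel, rpow_neg_one, ← div_eq_mul_inv] at h
  rw [h, beta, Gamma_mul_Gamma_one_sub, add_sub_cancel, Gamma_one, div_one, rpow_neg ha.le]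
  field_simp

theorem integral_Ioi_rpow_div_add_sq (ha : 0 < a) (hs₀ : 0 < s) (hs₁ : s < 1) :
    ∫ t in Ioi 0, t ^ (s - 1) / (a + t) ^ 2 = (1 - s) * π / (sin (π * s) * a ^ (2 - s)) := by
  have h := integral_Ioi_rpow_mul_add_rpow ha hs₀ (by linarith : 0 < 2 - s)
  simp only [add_sub_cancel, rpow_neg_ofNat, zpow_neg, zpow_ofNat, ← div_eq_mul_inv] at h
  have hΓ : Gamma s * Gamma (2 - s) = (1 - s) * (π / sin (π * s)) := by
    rw [show 2 - s = (1 - s) + 1 by ring, Gamma_add_one (sub_pos.2 hs₁).ne', mul_left_comm,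
      Gamma_mul_Gamma_one_sub]
  rw [h, beta, add_sub_cancel, Gamma_two, div_one, hΓ, rpow_neg ha.le]
  field_simp

theorem setIntegral_Ioi_div_add_mul_add {f : ℝ → ℝ} {C D : ℝ} (hC : 0 ≤ C) (hD : 0 ≤ D)
    (hCD : C ≠ D) (hfC : IntegrableOn (fun t ↦ f t / (C + t)) (Ioi 0))
    (hfD : IntegrableOn (fun t ↦ f t / (D + t)) (Ioi 0)) :
    ∫ t in Ioi 0, f t / ((C + t) * (D + t))
      = ((∫ t in Ioi 0, f t / (C + t)) - ∫ t in Ioi 0, f t / (D + t)) / (D - C) := by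
  rw [← integral_sub hfC hfD, ← integral_div]
  refine setIntegral_congr_fun measurableSet_Ioi fun t (ht : 0 < t) ↦ ?_
  have : C + t ≠ 0 := by positivity
  have : D + t ≠ 0 := by positivity
  have : D - C ≠ 0 := sub_ne_zero.2 hCD.symm
  field_simp
  ring

theorem sin_pi_mul_three_div_four : sin (π * (3 / 4)) = √2 / 2 := by
  rw [show π * (3 / 4) = π - π / 4 by ring, sin_pi_sub, sin_pi_div_four]

theorem exists_pow_four_eq (hx : 0 < x) : ∃ c > 0, x = c ^ 4 := by
  refine ⟨x ^ (1 / 4 : ℝ), by positivity, ?_⟩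
  rw [← rpow_natCast, ← rpow_mul hx.le]
  norm_num

end

theorem integral_rpow_neg_quarter_div (C D : ℝ) (hC : 0 < C) (hD : 0 < D) :
    ∫ t in Set.Ioi (0:ℝ), t ^ (-(1/4) : ℝ) / ((C + t) * (D + t))
      = π * Real.sqrt 2 /
          (C ^ ((1:ℝ)/4) * (Real.sqrt C + Real.sqrt D) *
            (C ^ ((1:ℝ)/4) + D ^ ((1:ℝ)/4)) * D ^ ((1:ℝ)/4)) := by
  obtain ⟨c, hc, rfl⟩ := exists_pow_four_eq hC
  obtain ⟨d, hd, rfl⟩ := exists_pow_four_eq hD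
  have hsqrt : ∀ x : ℝ, √(x ^ 4) = x ^ 2 := fun x ↦ by
    rw [show x ^ 4 = (x ^ 2) ^ 2 by ring, sqrt_sq (sq_nonneg x)]
  have h2 : √2 ^ 2 = 2 := sq_sqrt zero_le_two
  have hs₀ : (0 : ℝ) < 3 / 4 := by norm_num
  have hs₁ : (3 / 4 : ℝ) < 1 := by norm_num
  rw [show (-(1/4) : ℝ) = 3 / 4 - 1 by norm_num, hsqrt, hsqrt]
  rcases eq_or_ne c d with rfl | hcd
  · simp only [← sq]
    rw [integral_Ioi_rpow_div_add_sq (by positivity) hs₀ hs₁, sin_pi_mul_three_div_four]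
    simp only [← rpow_natCast_mul hc.le]
    norm_num
    field_simp
    rw [h2]
    ring
  · have hcd4 : c ^ 4 ≠ d ^ 4 := fun h ↦ hcd ((pow_left_inj₀ hc.le hd.le four_ne_zero).1 h)
    rw [setIntegral_Ioi_div_add_mul_add (by positivity) (by positivity) hcd4
      (integrableOn_Ioi_rpow_div_add (by positivity) hs₀ hs₁)
      (integrableOn_Ioi_rpow_div_add (by positivity) hs₀ hs₁),
      integral_Ioi_rpow_div_add (by positivity) hs₀ hs₁,
      integral_Ioi_rpow_div_add (by positivity) hs₀ hs₁, sin_pi_mul_three_div_four]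
    simp only [← rpow_natCast_mul hc.le, ← rpow_natCast_mul hd.le]
    norm_num
    field_simp
    rw [h2]
    ring
end

section
/- For β ∈ (-1/2,1/2) and γ, δ > 0, the integral operator Q on L²((0,∞)) with kernel Q(u,v) = u^{(1/2-β)γ - 1/2} v^{(1/2+β)δ - 1/2} / (u^γ + v^δ) is bounded with norm at most (1/√(γδ)) · π/cos(βπ). -/
/-!
Schur test with the weight `t ^ (-1/2)` on both sides: Cauchy–Schwarz against the weight and
Tonelli show that `∫ |K(x,y)| q(y) dy ≤ C₁ p(x)` and `∫ |K(x,y)| p(x) dx ≤ C₂ q(y)` bound the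
`L²` norm of the operator by `√(C₁ C₂)`. For `Q` both weighted integrals are computed exactly:
the substitution `v = (u ^ γ t) ^ (1/δ)` turns the row integral into
`u ^ (-1/2) δ⁻¹ ∫₀^∞ t ^ (σ-1) / (1 + t) dt` with `σ = 1/2 + β`, and `t = x / (1 - x)` turns this
into the Beta integral `B(σ, 1 - σ) = π / sin (π σ) = π / cos (β π)`. The columns are symmetric,
so `C₁ C₂ = (π / cos (β π)) ^ 2 / (γ δ)`.
-/

open Real MeasureTheory Set
open scoped ENNReal

section SchurTest

variable {X Y : Type*} [MeasurableSpace X] [MeasurableSpace Y] {μ : Measure X} {ν : Measure Y}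

theorem lintegral_mul_sq_le_lintegral_mul_weight {K F q : Y → ℝ≥0∞} (hK : AEMeasurable K ν)
    (hF : AEMeasurable F ν) (hq : AEMeasurable q ν) (hq0 : ∀ᵐ y ∂ν, q y ≠ 0)
    (hqtop : ∀ᵐ y ∂ν, q y ≠ ∞) :
    (∫⁻ y, K y * F y ∂ν) ^ 2 ≤ (∫⁻ y, K y * q y ∂ν) * ∫⁻ y, K y * F y ^ 2 / q y ∂ν := by
  have hsplit : ∫⁻ y, K y * F y ∂ν
      = ∫⁻ y, (K y * q y) ^ (1/2 : ℝ) * (K y * F y ^ 2 / q y) ^ (1/2 : ℝ) ∂ν := by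
    refine lintegral_congr_ae ?_
    filter_upwards [hq0, hqtop] with y hy0 hytop
    rw [← ENNReal.mul_rpow_of_nonneg _ _ (by norm_num),
      show K y * q y * (K y * F y ^ 2 / q y) = (K y * F y) ^ 2 by
        rw [mul_right_comm, mul_div_assoc', ENNReal.div_mul_cancel hy0 hytop]; ring,
      ← ENNReal.rpow_two, ← ENNReal.rpow_mul]
    norm_num
  rw [hsplit]
  calc (∫⁻ y, (K y * q y) ^ (1/2 : ℝ) * (K y * F y ^ 2 / q y) ^ (1/2 : ℝ) ∂ν) ^ 2
      ≤ ((∫⁻ y, K y * q y ∂ν) ^ (1/2 : ℝ) * (∫⁻ y, K y * F y ^ 2 / q y ∂ν) ^ (1/2 : ℝ)) ^ 2 := by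
        gcongr
        exact ENNReal.lintegral_mul_norm_pow_le (hK.mul hq)
          ((hK.mul (hF.pow_const 2)).div hq) (by norm_num) (by norm_num) (by norm_num)
    _ = (∫⁻ y, K y * q y ∂ν) * ∫⁻ y, K y * F y ^ 2 / q y ∂ν := by
        rw [← ENNReal.mul_rpow_of_nonneg _ _ (by norm_num), ← ENNReal.rpow_two,
          ← ENNReal.rpow_mul]
        norm_num

theorem lintegral_sq_lintegral_mul_le_of_schur [SFinite μ] [SFinite ν] {K : X → Y → ℝ≥0∞}
    (hK : Measurable (Function.uncurry K)) {p : X → ℝ≥0∞} {q : Y → ℝ≥0∞}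
    (hp : Measurable p) (hq : Measurable q) (hq0 : ∀ᵐ y ∂ν, q y ≠ 0)
    (hqtop : ∀ᵐ y ∂ν, q y ≠ ∞) {C₁ C₂ : ℝ≥0∞}
    (hrow : ∀ᵐ x ∂μ, ∫⁻ y, K x y * q y ∂ν ≤ C₁ * p x)
    (hcol : ∀ᵐ y ∂ν, ∫⁻ x, K x y * p x ∂μ ≤ C₂ * q y)
    {F : Y → ℝ≥0∞} (hF : Measurable F) :
    ∫⁻ x, (∫⁻ y, K x y * F y ∂ν) ^ 2 ∂μ ≤ C₁ * C₂ * ∫⁻ y, F y ^ 2 ∂ν := by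
  set G : Y → ℝ≥0∞ := fun y => F y ^ 2 / q y
  have hG : Measurable G := (hF.pow_const 2).div hq
  have hKx (x : X) : Measurable (K x) := hK.comp measurable_prodMk_left
  calc ∫⁻ x, (∫⁻ y, K x y * F y ∂ν) ^ 2 ∂μ
      ≤ ∫⁻ x, C₁ * (p x * ∫⁻ y, K x y * G y ∂ν) ∂μ := by
        refine lintegral_mono_ae ?_
        filter_upwards [hrow] with x hx
        refine (lintegral_mul_sq_le_lintegral_mul_weight (hKx x).aemeasurable hF.aemeasurable
          hq.aemeasurable hq0 hqtop).trans ?_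
        simp only [G, mul_div_assoc, ← mul_assoc]
        gcongr
    _ = C₁ * ∫⁻ y, (∫⁻ x, K x y * p x ∂μ) * G y ∂ν := by
        have hKp : Measurable fun y => ∫⁻ x, K x y * p x ∂μ :=
          (hK.mul (hp.comp measurable_fst)).lintegral_prod_left'
        calc ∫⁻ x, C₁ * (p x * ∫⁻ y, K x y * G y ∂ν) ∂μ
            = ∫⁻ x, ∫⁻ y, C₁ * (p x * (K x y * G y)) ∂ν ∂μ := by
              refine lintegral_congr fun x => ?_
              rw [lintegral_const_mul _ (by fun_prop), lintegral_const_mul _ (by fun_prop)]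
          _ = ∫⁻ y, ∫⁻ x, C₁ * (p x * (K x y * G y)) ∂μ ∂ν :=
              lintegral_lintegral_swap (by fun_prop)
          _ = C₁ * ∫⁻ y, (∫⁻ x, K x y * p x ∂μ) * G y ∂ν := by
              rw [← lintegral_const_mul C₁ (f := fun y => (∫⁻ x, K x y * p x ∂μ) * G y)
                (hKp.mul hG)]
              refine lintegral_congr fun y => ?_
              rw [← lintegral_mul_const _ (by fun_prop), ← lintegral_const_mul _ (by fun_prop)]
              exact lintegral_congr fun x => by ring
    _ ≤ C₁ * ∫⁻ y, C₂ * q y * G y ∂ν := by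
        gcongr C₁ * ?_
        exact lintegral_mono_ae (hcol.mono fun y hy => mul_le_mul_left hy _)
    _ = C₁ * C₂ * ∫⁻ y, F y ^ 2 ∂ν := by
        rw [mul_assoc C₁, ← lintegral_const_mul C₂ (hF.pow_const 2)]
        congr 1
        refine lintegral_congr_ae ?_
        filter_upwards [hq0, hqtop] with y hy0 hytop
        rw [mul_assoc, ENNReal.mul_div_cancel hy0 hytop]

theorem eLpNorm_integral_mul_le_of_schur [SFinite μ] [SFinite ν] {K : X → Y → ℝ}
    (hK : Measurable (Function.uncurry K)) {p : X → ℝ≥0∞} {q : Y → ℝ≥0∞}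
    (hp : Measurable p) (hq : Measurable q) (hq0 : ∀ᵐ y ∂ν, q y ≠ 0)
    (hqtop : ∀ᵐ y ∂ν, q y ≠ ∞) {C₁ C₂ : ℝ≥0∞}
    (hrow : ∀ᵐ x ∂μ, ∫⁻ y, ‖K x y‖ₑ * q y ∂ν ≤ C₁ * p x)
    (hcol : ∀ᵐ y ∂ν, ∫⁻ x, ‖K x y‖ₑ * p x ∂μ ≤ C₂ * q y)
    {f : Y → ℝ} (hf : AEStronglyMeasurable f ν) :
    eLpNorm (fun x => ∫ y, K x y * f y ∂ν) 2 μ ≤ (C₁ * C₂) ^ (1/2 : ℝ) * eLpNorm f 2 ν := by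
  set F : Y → ℝ≥0∞ := fun y => ‖hf.mk f y‖ₑ
  have hF : Measurable F := hf.stronglyMeasurable_mk.measurable.enorm
  have hpointwise (x : X) : ‖∫ y, K x y * f y ∂ν‖ₑ ≤ ∫⁻ y, ‖K x y‖ₑ * F y ∂ν :=
    (enorm_integral_le_lintegral_enorm _).trans_eq <| lintegral_congr_ae <|
      hf.ae_eq_mk.mono fun y hy => by simp only [F, enorm_mul, hy]
  have hschur := lintegral_sq_lintegral_mul_le_of_schur (μ := μ) (K := fun x y => ‖K x y‖ₑ)
    hK.enorm hp hq hq0 hqtop hrow hcol hF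
  rw [eLpNorm_congr_ae hf.ae_eq_mk]
  simp only [eLpNorm_eq_lintegral_rpow_enorm_toReal two_ne_zero ENNReal.ofNat_ne_top,
    ENNReal.toReal_ofNat, ENNReal.rpow_two]
  rw [← ENNReal.mul_rpow_of_nonneg _ _ (by norm_num)]
  gcongr
  exact (lintegral_mono fun x => by gcongr; exact hpointwise x).trans hschur

end SchurTest

theorem lintegral_rpow_mul_one_sub_rpow_neg {s : ℝ} (hs : s ∈ Ioo (0 : ℝ) 1) :
    ∫⁻ x in Ioo (0 : ℝ) 1, ENNReal.ofReal (x ^ (s - 1) * (1 - x) ^ (-s))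
      = ENNReal.ofReal (π / sin (π * s)) := by
  set g : ℝ → ℝ := fun x => x ^ (s - 1) * (1 - x) ^ (-s)
  have hre : 0 < (s : ℂ).re := by simpa using hs.1
  have hre' : 0 < (1 - (s : ℂ)).re := by simpa using hs.2
  have hcast : ∀ x ∈ Icc (0 : ℝ) 1,
      (x : ℂ) ^ ((s : ℂ) - 1) * (1 - (x : ℂ)) ^ ((1 : ℂ) - s - 1) = (g x : ℂ) := by
    intro x hx
    rw [Complex.ofReal_mul, Complex.ofReal_cpow hx.1, Complex.ofReal_cpow (sub_nonneg.2 hx.2)]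
    push_cast
    ring_nf
  have hint : IntegrableOn g (Ioc 0 1) := by
    refine IntegrableOn.congr_fun (Complex.betaIntegral_convergent hre hre').1.re
      (fun x hx => ?_) measurableSet_Ioc
    simp only [RCLike.re_to_complex, hcast x (Ioc_subset_Icc_self hx), Complex.ofReal_re]
  have hval : ∫ x in Ioc (0 : ℝ) 1, g x = π / sin (π * s) := by
    have hbeta := Complex.Gamma_mul_Gamma_eq_betaIntegral hre hre'
    rw [add_sub_cancel, Complex.Gamma_one, one_mul, Complex.Gamma_mul_Gamma_one_sub,
      Complex.betaIntegral, intervalIntegral.integral_congr (fun x hx => hcast x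
        (by rwa [uIcc_of_le zero_le_one] at hx)), intervalIntegral.integral_ofReal,
      intervalIntegral.integral_of_le zero_le_one] at hbeta
    exact_mod_cast hbeta.symm
  rw [setLIntegral_congr Ioo_ae_eq_Ioc, ← ofReal_integral_eq_lintegral_ofReal hint, hval]
  exact (ae_restrict_iff' measurableSet_Ioc).2 <| ae_of_all _ fun x hx =>
    mul_nonneg (rpow_nonneg hx.1.le _) (rpow_nonneg (sub_nonneg.2 hx.2) _)

theorem image_div_one_sub_Ioo : (fun x : ℝ => x / (1 - x)) '' Ioo 0 1 = Ioi 0 := by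
  ext t
  constructor
  · rintro ⟨x, hx, rfl⟩
    exact div_pos hx.1 (sub_pos.2 hx.2)
  · intro ht
    have ht' : (0 : ℝ) < t := ht
    refine ⟨t / (1 + t), ⟨by positivity, (div_lt_one (by positivity)).2 (by linarith)⟩, ?_⟩
    field_simp
    ring

theorem strictMonoOn_div_one_sub : StrictMonoOn (fun x : ℝ => x / (1 - x)) (Ioo 0 1) := by
  intro a ha b hb hab
  have ha' : 0 < 1 - a := sub_pos.2 ha.2
  have hb' : 0 < 1 - b := sub_pos.2 hb.2
  simp only
  rw [div_lt_div_iff₀ ha' hb']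
  nlinarith

theorem lintegral_rpow_div_one_add {s : ℝ} (hs : s ∈ Ioo (0 : ℝ) 1) :
    ∫⁻ t in Ioi (0 : ℝ), ENNReal.ofReal (t ^ (s - 1) / (1 + t))
      = ENNReal.ofReal (π / sin (π * s)) := by
  have hderiv : ∀ x ∈ Ioo (0 : ℝ) 1,
      HasDerivWithinAt (fun x : ℝ => x / (1 - x)) ((1 - x)⁻¹ ^ 2) (Ioo 0 1) x := by
    intro x hx
    have hx' : 1 - x ≠ 0 := (sub_pos.2 hx.2).ne'
    refine (((hasDerivAt_id x).div ((hasDerivAt_id x).const_sub 1) hx').congr_deriv ?_)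
      |>.hasDerivWithinAt
    simp only [id]
    field_simp
    ring
  rw [← image_div_one_sub_Ioo, lintegral_image_eq_lintegral_abs_deriv_mul measurableSet_Ioo
    hderiv strictMonoOn_div_one_sub.injOn, ← lintegral_rpow_mul_one_sub_rpow_neg hs]
  refine setLIntegral_congr_fun measurableSet_Ioo fun x hx => ?_
  have hx0 : 0 < x := hx.1
  have hx1 : 0 < 1 - x := sub_pos.2 hx.2
  rw [← ENNReal.ofReal_mul (abs_nonneg _), abs_of_pos (by positivity),
    div_rpow hx0.le hx1.le, show 1 + x / (1 - x) = (1 - x)⁻¹ by field_simp; ring,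
    show (1 - x) ^ (-s) = (1 - x)⁻¹ / (1 - x) ^ (s - 1) by
      rw [rpow_neg hx1.le, rpow_sub_one hx1.ne']; field_simp]
  congr 1
  field_simp

section Scaling

variable {c δ : ℝ}

theorem image_mul_rpow_inv_Ioi (hc : 0 < c) (hδ : 0 < δ) :
    (fun t : ℝ => (c * t) ^ δ⁻¹) '' Ioi 0 = Ioi 0 := by
  ext v
  constructor
  · rintro ⟨t, ht, rfl⟩
    exact rpow_pos_of_pos (mul_pos hc ht) _
  · intro hv
    refine ⟨v ^ δ / c, div_pos (rpow_pos_of_pos hv _) hc, ?_⟩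
    simp only
    rw [mul_div_cancel₀ _ hc.ne', ← rpow_mul (le_of_lt hv), mul_inv_cancel₀ hδ.ne', rpow_one]

theorem injOn_mul_rpow_inv (hc : 0 < c) (hδ : 0 < δ) :
    InjOn (fun t : ℝ => (c * t) ^ δ⁻¹) (Ioi 0) := fun _ ha _ hb hab =>
  mul_left_cancel₀ hc.ne' <| rpow_left_injOn (inv_ne_zero hδ.ne')
    (mul_pos hc ha).le (mul_pos hc hb).le hab

theorem lintegral_rpow_div_add_rpow (hc : 0 < c) (hδ : 0 < δ) {σ : ℝ} (hσ : σ ∈ Ioo (0 : ℝ) 1) :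
    ∫⁻ v in Ioi (0 : ℝ), ENNReal.ofReal (v ^ (σ * δ - 1) / (c + v ^ δ))
      = ENNReal.ofReal (c ^ (σ - 1) * (π / sin (π * σ) / δ)) := by
  have hderiv : ∀ t ∈ Ioi (0 : ℝ), HasDerivWithinAt (fun t : ℝ => (c * t) ^ δ⁻¹)
      (c * δ⁻¹ * (c * t) ^ (δ⁻¹ - 1)) (Ioi 0) t := fun t ht =>
    (((hasDerivAt_id t).const_mul c).rpow_const (Or.inl (mul_pos hc ht).ne')).hasDerivWithinAt
      |>.congr_deriv (by simp only [id, mul_one])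
  rw [← image_mul_rpow_inv_Ioi hc hδ, lintegral_image_eq_lintegral_abs_deriv_mul
    measurableSet_Ioi hderiv (injOn_mul_rpow_inv hc hδ)]
  calc ∫⁻ t in Ioi 0, ENNReal.ofReal |c * δ⁻¹ * (c * t) ^ (δ⁻¹ - 1)|
          * ENNReal.ofReal (((c * t) ^ δ⁻¹) ^ (σ * δ - 1) / (c + ((c * t) ^ δ⁻¹) ^ δ))
      = ∫⁻ t in Ioi 0,
          ENNReal.ofReal (c ^ (σ - 1) / δ) * ENNReal.ofReal (t ^ (σ - 1) / (1 + t)) := by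
        refine setLIntegral_congr_fun measurableSet_Ioi fun t ht => ?_
        have ht : 0 < t := ht
        have hct : 0 < c * t := mul_pos hc ht
        have hpow : (c * t) ^ (δ⁻¹ - 1) * (c * t) ^ (δ⁻¹ * (σ * δ - 1))
            = c ^ (σ - 1) * t ^ (σ - 1) := by
          rw [← rpow_add hct, show δ⁻¹ - 1 + δ⁻¹ * (σ * δ - 1) = σ - 1 by field_simp; ring,
            mul_rpow hc.le ht.le]
        rw [← ENNReal.ofReal_mul (abs_nonneg _), ← ENNReal.ofReal_mul (by positivity),
          abs_of_pos (by positivity), ← rpow_mul hct.le, ← rpow_mul hct.le,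
          inv_mul_cancel₀ hδ.ne', rpow_one]
        congr 1
        calc c * δ⁻¹ * (c * t) ^ (δ⁻¹ - 1) * ((c * t) ^ (δ⁻¹ * (σ * δ - 1)) / (c + c * t))
            = c * δ⁻¹ * ((c * t) ^ (δ⁻¹ - 1) * (c * t) ^ (δ⁻¹ * (σ * δ - 1))) / (c * (1 + t)) := by
              ring
          _ = c ^ (σ - 1) / δ * (t ^ (σ - 1) / (1 + t)) := by
              rw [hpow]
              field_simp
    _ = ENNReal.ofReal (c ^ (σ - 1) * (π / sin (π * σ) / δ)) := by
        rw [lintegral_const_mul' _ _ ENNReal.ofReal_ne_top, lintegral_rpow_div_one_add hσ,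
          ← ENNReal.ofReal_mul (by positivity)]
        congr 1
        field_simp

end Scaling

noncomputable def powerKernel (γ δ a b u v : ℝ) : ℝ := u ^ a * v ^ b / (u ^ γ + v ^ δ)

section PowerKernel

variable {γ δ a b : ℝ}

theorem powerKernel_swap (u v : ℝ) : powerKernel γ δ a b u v = powerKernel δ γ b a v u := by
  rw [powerKernel, powerKernel, mul_comm, add_comm]

theorem measurable_uncurry_powerKernel : Measurable (Function.uncurry (powerKernel γ δ a b)) := by
  unfold powerKernel
  fun_prop

theorem lintegral_enorm_powerKernel_mul_rpow_neg_half (hδ : 0 < δ) {σ : ℝ}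
    (hσ : σ ∈ Ioo (0 : ℝ) 1) {u : ℝ} (hu : 0 < u) :
    ∫⁻ v in Ioi (0 : ℝ), ‖powerKernel γ δ a (σ * δ - 1/2) u v‖ₑ * ENNReal.ofReal (v ^ (-(1/2) : ℝ))
      = ENNReal.ofReal (π / sin (π * σ) / δ) * ENNReal.ofReal (u ^ (a + γ * (σ - 1))) := by
  calc ∫⁻ v in Ioi (0 : ℝ), ‖powerKernel γ δ a (σ * δ - 1/2) u v‖ₑ
          * ENNReal.ofReal (v ^ (-(1/2) : ℝ))
      = ∫⁻ v in Ioi (0 : ℝ), ENNReal.ofReal (u ^ a)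
          * ENNReal.ofReal (v ^ (σ * δ - 1) / (u ^ γ + v ^ δ)) := by
        refine setLIntegral_congr_fun measurableSet_Ioi fun v hv => ?_
        have hv : 0 < v := hv
        rw [Real.enorm_eq_ofReal (by unfold powerKernel; positivity),
          ← ENNReal.ofReal_mul (by unfold powerKernel; positivity),
          ← ENNReal.ofReal_mul (by positivity), powerKernel, mul_div_right_comm, mul_assoc,
          div_mul_eq_mul_div, ← rpow_add hv]
        ring_nf
    _ = ENNReal.ofReal (π / sin (π * σ) / δ) * ENNReal.ofReal (u ^ (a + γ * (σ - 1))) := by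
        rw [lintegral_const_mul' _ _ ENNReal.ofReal_ne_top,
          lintegral_rpow_div_add_rpow (rpow_pos_of_pos hu γ) hδ hσ,
          ← ENNReal.ofReal_mul (rpow_nonneg hu.le a), ← ENNReal.ofReal_mul' (rpow_nonneg hu.le _),
          ← rpow_mul hu.le, rpow_add hu]
        ring_nf

end PowerKernel

theorem sqrt_div_mul_div {γ δ x : ℝ} (hγ : 0 < γ) (hδ : 0 < δ) (hx : 0 ≤ x) :
    √(x / δ * (x / γ)) = 1 / √(γ * δ) * x := by
  rw [show x / δ * (x / γ) = x ^ 2 / (γ * δ) by field_simp, sqrt_div' _ (by positivity),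
    sqrt_sq hx, one_div_mul_eq_div]

/-- The integral operator on `L²((0,∞))` with kernel
`Q(u,v) = u^{(1/2-β)γ-1/2} v^{(1/2+β)δ-1/2}/(u^γ+v^δ)` is bounded with norm at most
`(γδ)^{-1/2} π / cos(βπ)`. -/
theorem schur_bound_Q (β γ δ : ℝ) (hβ : β ∈ Set.Ioo (-(1/2) : ℝ) (1/2))
    (hγ : 0 < γ) (hδ : 0 < δ)
    (f : ℝ → ℝ) (hf : MemLp f 2 (volume.restrict (Set.Ioi 0))) :
    eLpNorm (fun u : ℝ => ∫ v in Set.Ioi (0:ℝ),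
        (u ^ ((1/2 - β) * γ - 1/2) * v ^ ((1/2 + β) * δ - 1/2) / (u ^ γ + v ^ δ)) * f v) 2
        (volume.restrict (Set.Ioi 0))
      ≤ ENNReal.ofReal ((1 / Real.sqrt (γ * δ)) * (π / Real.cos (β * π))) *
          eLpNorm f 2 (volume.restrict (Set.Ioi 0)) := by
  obtain ⟨hβ₁, hβ₂⟩ := hβ
  have hcos : 0 < cos (β * π) := cos_pos_of_mem_Ioo ⟨by nlinarith [pi_pos], by nlinarith [pi_pos]⟩
  set w : ℝ → ℝ≥0∞ := fun v => ENNReal.ofReal (v ^ (-(1/2) : ℝ))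
  have hrow : ∀ᵐ u ∂volume.restrict (Ioi (0 : ℝ)),
      ∫⁻ v in Ioi 0, ‖powerKernel γ δ ((1/2 - β) * γ - 1/2) ((1/2 + β) * δ - 1/2) u v‖ₑ * w v
        ≤ ENNReal.ofReal (π / cos (β * π) / δ) * w u := by
    filter_upwards [ae_restrict_mem measurableSet_Ioi] with u hu
    rw [lintegral_enorm_powerKernel_mul_rpow_neg_half hδ ⟨by linarith, by linarith⟩ hu,
      show π * (1/2 + β) = π / 2 - -(β * π) by ring, sin_pi_div_two_sub, cos_neg,
      show (1/2 - β) * γ - 1/2 + γ * (1/2 + β - 1) = -(1/2) by ring]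
  have hcol : ∀ᵐ v ∂volume.restrict (Ioi (0 : ℝ)),
      ∫⁻ u in Ioi 0, ‖powerKernel γ δ ((1/2 - β) * γ - 1/2) ((1/2 + β) * δ - 1/2) u v‖ₑ * w u
        ≤ ENNReal.ofReal (π / cos (β * π) / γ) * w v := by
    filter_upwards [ae_restrict_mem measurableSet_Ioi] with v hv
    simp_rw [powerKernel_swap _ v]
    rw [lintegral_enorm_powerKernel_mul_rpow_neg_half hγ ⟨by linarith, by linarith⟩ hv,
      show π * (1/2 - β) = π / 2 - β * π by ring, sin_pi_div_two_sub,
      show (1/2 + β) * δ - 1/2 + δ * (1/2 - β - 1) = -(1/2) by ring]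
  have hw0 : ∀ᵐ v ∂volume.restrict (Ioi (0 : ℝ)), w v ≠ 0 := by
    filter_upwards [ae_restrict_mem measurableSet_Ioi] with v hv
    exact (ENNReal.ofReal_pos.2 (rpow_pos_of_pos hv _)).ne'
  refine (eLpNorm_integral_mul_le_of_schur measurable_uncurry_powerKernel (by fun_prop)
    (by fun_prop) hw0 (ae_of_all _ fun _ => ENNReal.ofReal_ne_top) hrow hcol
    hf.aestronglyMeasurable).trans_eq ?_
  rw [← ENNReal.ofReal_mul (by positivity), ENNReal.ofReal_rpow_of_nonneg (by positivity)
    (by norm_num), ← sqrt_eq_rpow, sqrt_div_mul_div hγ hδ (by positivity)]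
end

section
/- For λ > 0, s ∈ (0,2), and f ∈ L²(ℝ³) with (|p|²+λ)^{s/2} f̂ ∈ L²(ℝ³), define c(t) = (2π)^{-3/2} ∫_{ℝ³} (|p|²+λ)^{s/2} f̂(p) / (|p|²+λ+t) dp for t ≥ 0. Then c is continuous on [0,∞) and there is a constant C (independent of f and t) with |c(t)| ≤ C ‖(|p|²+λ)^{s/2} f̂‖_{L²} (1+t)^{-1/4} for all t ≥ 0. -/
open Real MeasureTheory Set Module
open scoped FourierTransform

/-!
With `g = (|p|² + λ)^{s/2} f̂`, Cauchy–Schwarz gives `|c(t)| ≤ (2π)^{-3/2} ‖g‖₂ ‖(|p|² + a)⁻¹‖₂`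
with `a = λ + t`. The substitution `p = √a q` shows `‖(|p|² + a)⁻¹‖₂² = a^{d/2-2} ∫ (1 + |q|²)⁻²`,
which is finite exactly when `d < 4`; for `d = 3` this is `a^{-1/2}`, and `λ + t ≥ min(λ, 1)(1 + t)`
turns `a^{-1/4}` into the decay `(1 + t)^{-1/4}`. Continuity is dominated convergence, with the
integrable majorant `(|p|² + λ)⁻¹ |g|` supplied by the same Cauchy–Schwarz bound.
-/

lemma integral_norm_rpow_two_rpow_half {α F : Type*} [MeasurableSpace α] [NormedAddCommGroup F]
    {μ : Measure α} {g : α → F} (hg : MemLp g 2 μ) :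
    (∫ p, ‖g p‖ ^ (2 : ℝ) ∂μ) ^ (1 / 2 : ℝ) = (eLpNorm g 2 μ).toReal := by
  rw [hg.eLpNorm_eq_integral_rpow_norm two_ne_zero ENNReal.ofNat_ne_top,
    ENNReal.toReal_ofReal (by positivity)]
  norm_num

lemma min_one_mul_one_add_le_add {a x : ℝ} (hx : 0 ≤ x) : min a 1 * (1 + x) ≤ a + x := by
  nlinarith [min_le_left a 1, min_le_right a 1]

lemma add_rpow_le_min_one_rpow_mul_one_add_rpow {a x r : ℝ} (ha : 0 < a) (hx : 0 ≤ x)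
    (hr : r ≤ 0) : (a + x) ^ r ≤ min a 1 ^ r * (1 + x) ^ r := by
  rw [← mul_rpow (lt_min ha one_pos).le (by positivity)]
  exact rpow_le_rpow_of_nonpos (by positivity) (min_one_mul_one_add_le_add hx) hr

section Resolvent

variable {E : Type*} [NormedAddCommGroup E] [InnerProductSpace ℝ E] [FiniteDimensional ℝ E]
  [MeasurableSpace E] [BorelSpace E] (μ : Measure E) [μ.IsAddHaarMeasure]

lemma integrable_inv_one_add_norm_sq_sq (hd : finrank ℝ E < 4) :
    Integrable (fun q : E => ((1 + ‖q‖ ^ 2) ^ 2)⁻¹) μ := by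
  have hd' : (finrank ℝ E : ℝ) < 4 := by exact_mod_cast hd
  refine (integrable_rpow_neg_one_add_norm_sq (μ := μ) hd').congr (.of_forall fun q => ?_)
  dsimp only
  rw [show -(4 : ℝ) / 2 = -(2 : ℕ) by norm_num, rpow_neg (by positivity), rpow_natCast]

lemma integral_inv_one_add_norm_sq_sq_pos (hd : finrank ℝ E < 4) :
    0 < ∫ q : E, ((1 + ‖q‖ ^ 2) ^ 2)⁻¹ ∂μ := by
  rw [integral_pos_iff_support_of_nonneg (fun q => by positivity)
    (integrable_inv_one_add_norm_sq_sq μ hd)]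
  have : Function.support (fun q : E => ((1 + ‖q‖ ^ 2) ^ 2)⁻¹) = univ :=
    Function.support_eq_univ fun q => by positivity
  simpa [this] using NeZero.ne μ

lemma integrable_inv_norm_sq_add_sq (hd : finrank ℝ E < 4) {a : ℝ} (ha : 0 < a) :
    Integrable (fun p : E => ((‖p‖ ^ 2 + a) ^ 2)⁻¹) μ := by
  refine ((integrable_inv_one_add_norm_sq_sq μ hd).const_mul ((min a 1 ^ 2)⁻¹)).mono'
    (by fun_prop (disch := intros; positivity)) (.of_forall fun p => ?_)
  have hm : 0 < min a 1 := lt_min ha one_pos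
  rw [norm_of_nonneg (by positivity), ← mul_inv, ← mul_pow, add_comm _ a]
  gcongr
  exact min_one_mul_one_add_le_add (by positivity)

lemma memLp_two_inv_norm_sq_add (hd : finrank ℝ E < 4) {a : ℝ} (ha : 0 < a) :
    MemLp (fun p : E => (‖p‖ ^ 2 + a)⁻¹) 2 μ := by
  rw [memLp_two_iff_integrable_sq (by fun_prop (disch := intros; positivity))]
  simpa only [inv_pow] using integrable_inv_norm_sq_add_sq μ hd ha

/-- Scaling `p = √a • q`. -/
lemma integral_inv_norm_sq_add_sq {a : ℝ} (ha : 0 < a) :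
    ∫ p : E, ((‖p‖ ^ 2 + a) ^ 2)⁻¹ ∂μ
      = a ^ ((finrank ℝ E : ℝ) / 2 - 2) * ∫ q : E, ((1 + ‖q‖ ^ 2) ^ 2)⁻¹ ∂μ := by
  have hscale := μ.integral_comp_smul_of_nonneg (fun p : E => ((‖p‖ ^ 2 + a) ^ 2)⁻¹) √a
    (hR := sqrt_nonneg a)
  have hlhs : ∀ q : E, ((‖√a • q‖ ^ 2 + a) ^ 2)⁻¹ = (a ^ 2)⁻¹ * ((1 + ‖q‖ ^ 2) ^ 2)⁻¹ := by
    intro q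
    rw [norm_smul, norm_of_nonneg (sqrt_nonneg a), mul_pow, sq_sqrt ha.le, ← mul_inv,
      ← mul_pow]
    ring_nf
  simp only [hlhs, integral_const_mul, smul_eq_mul] at hscale
  have hpow : √a ^ finrank ℝ E = a ^ ((finrank ℝ E : ℝ) / 2) := by
    rw [sqrt_eq_rpow, ← rpow_natCast, ← rpow_mul ha.le, one_div_mul_eq_div]
  rw [hpow, eq_inv_mul_iff_mul_eq₀ (rpow_pos_of_pos ha _).ne'] at hscale
  rw [← hscale, rpow_sub ha, rpow_two]
  ring

variable {μ}

lemma norm_integral_div_norm_sq_add_le (hd : finrank ℝ E < 4) {a : ℝ} (ha : 0 < a)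
    {g : E → ℂ} (hg : MemLp g 2 μ) :
    ‖∫ p, g p / ((‖p‖ ^ 2 + a : ℝ) : ℂ) ∂μ‖ ≤ (eLpNorm g 2 μ).toReal
      * (a ^ ((finrank ℝ E : ℝ) / 4 - 1) * √(∫ q : E, ((1 + ‖q‖ ^ 2) ^ 2)⁻¹ ∂μ)) := by
  have hw_norm : (∫ p : E, (‖p‖ ^ 2 + a)⁻¹ ^ (2 : ℝ) ∂μ) ^ (1 / 2 : ℝ)
      = a ^ ((finrank ℝ E : ℝ) / 4 - 1) * √(∫ q : E, ((1 + ‖q‖ ^ 2) ^ 2)⁻¹ ∂μ) := by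
    have hI : 0 ≤ ∫ q : E, ((1 + ‖q‖ ^ 2) ^ 2)⁻¹ ∂μ := integral_nonneg fun q => by positivity
    simp_rw [rpow_two, inv_pow]
    rw [integral_inv_norm_sq_add_sq μ ha, mul_rpow (by positivity) hI, ← rpow_mul ha.le,
      ← sqrt_eq_rpow]
    ring_nf
  have h2 : ENNReal.ofReal 2 = 2 := by norm_num
  calc ‖∫ p, g p / ((‖p‖ ^ 2 + a : ℝ) : ℂ) ∂μ‖
      ≤ ∫ p, ‖g p‖ * (‖p‖ ^ 2 + a)⁻¹ ∂μ := by
        refine (norm_integral_le_integral_norm _).trans_eq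
          (integral_congr_ae (.of_forall fun p => ?_))
        dsimp only
        rw [norm_div, Complex.norm_real, norm_of_nonneg (by positivity), div_eq_mul_inv]
    _ ≤ (∫ p, ‖g p‖ ^ (2 : ℝ) ∂μ) ^ (1 / 2 : ℝ)
          * (∫ p : E, (‖p‖ ^ 2 + a)⁻¹ ^ (2 : ℝ) ∂μ) ^ (1 / 2 : ℝ) := by
        refine integral_mul_le_Lp_mul_Lq_of_nonneg .two_two (.of_forall fun p => norm_nonneg _)
          (.of_forall fun p => by positivity) ?_ ?_ <;> rw [h2]
        exacts [hg.norm, memLp_two_inv_norm_sq_add μ hd ha]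
    _ = _ := by rw [integral_norm_rpow_two_rpow_half hg, hw_norm]

lemma norm_integral_div_norm_sq_add_add_le (hd : finrank ℝ E < 4) {lam t : ℝ} (hlam : 0 < lam)
    (ht : 0 ≤ t) {g : E → ℂ} (hg : MemLp g 2 μ) :
    ‖∫ p, g p / ((‖p‖ ^ 2 + lam + t : ℝ) : ℂ) ∂μ‖
      ≤ min lam 1 ^ ((finrank ℝ E : ℝ) / 4 - 1) * √(∫ q : E, ((1 + ‖q‖ ^ 2) ^ 2)⁻¹ ∂μ)
        * (eLpNorm g 2 μ).toReal * (1 + t) ^ ((finrank ℝ E : ℝ) / 4 - 1) := by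
  have hr : (finrank ℝ E : ℝ) / 4 - 1 ≤ 0 := by
    have : (finrank ℝ E : ℝ) ≤ 4 := by exact_mod_cast hd.le
    linarith
  simp only [add_assoc]
  refine (norm_integral_div_norm_sq_add_le hd (by positivity) hg).trans ?_
  have := add_rpow_le_min_one_rpow_mul_one_add_rpow hlam ht hr
  calc _ ≤ (eLpNorm g 2 μ).toReal * (min lam 1 ^ ((finrank ℝ E : ℝ) / 4 - 1)
        * (1 + t) ^ ((finrank ℝ E : ℝ) / 4 - 1) * √(∫ q : E, ((1 + ‖q‖ ^ 2) ^ 2)⁻¹ ∂μ)) := by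
        gcongr
    _ = _ := by ring

lemma continuousOn_integral_div_norm_sq_add_add (hd : finrank ℝ E < 4) {lam : ℝ}
    (hlam : 0 < lam) {g : E → ℂ} (hg : MemLp g 2 μ) :
    ContinuousOn (fun t : ℝ => ∫ p, g p / ((‖p‖ ^ 2 + lam + t : ℝ) : ℂ) ∂μ) (Ici 0) := by
  have hpos : ∀ p : E, ∀ t ∈ Ici (0 : ℝ), 0 < ‖p‖ ^ 2 + lam + t := fun p t ht =>
    add_pos_of_pos_of_nonneg (by positivity) ht
  refine continuousOn_of_dominated (bound := fun p => (‖p‖ ^ 2 + lam)⁻¹ * ‖g p‖) ?_ ?_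
    ((memLp_two_inv_norm_sq_add μ hd hlam).integrable_mul hg.norm) (.of_forall fun p => ?_)
  · intro t ht
    exact hg.1.div₀ (Continuous.aestronglyMeasurable (by fun_prop))
  · intro t ht
    refine .of_forall fun p => ?_
    rw [norm_div, Complex.norm_real, norm_of_nonneg (hpos p t ht).le, div_eq_inv_mul]
    exact mul_le_mul_of_nonneg_right (inv_anti₀ (by positivity)
      (le_add_of_nonneg_right (mem_Ici.mp ht))) (norm_nonneg _)
  · exact continuousOn_const.div (by fun_prop) fun t ht => by exact_mod_cast (hpos p t ht).ne'

end Resolvent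

theorem c_continuous_and_bound_general (lam s : ℝ) (hlam : 0 < lam) :
    ∃ C > 0, ∀ f : EuclideanSpace ℝ (Fin 3) → ℂ,
      MemLp f 2 volume →
      MemLp (fun p => (((‖p‖ ^ 2 + lam) ^ (s / 2) : ℝ) : ℂ) * 𝓕 f p) 2 volume →
      ContinuousOn (fun t : ℝ =>
          (((2 * π : ℝ) ^ ((3:ℝ) / 2))⁻¹ : ℝ) •
            ∫ p : EuclideanSpace ℝ (Fin 3),
              (((‖p‖ ^ 2 + lam) ^ (s / 2) : ℝ) : ℂ) * 𝓕 f p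
                / ((‖p‖ ^ 2 + lam + t : ℝ) : ℂ)) (Set.Ici 0) ∧
      ∀ t : ℝ, 0 ≤ t →
        ‖(((2 * π : ℝ) ^ ((3:ℝ) / 2))⁻¹ : ℝ) •
            ∫ p : EuclideanSpace ℝ (Fin 3),
              (((‖p‖ ^ 2 + lam) ^ (s / 2) : ℝ) : ℂ) * 𝓕 f p
                / ((‖p‖ ^ 2 + lam + t : ℝ) : ℂ)‖
          ≤ C * (eLpNorm (fun p => (((‖p‖ ^ 2 + lam) ^ (s / 2) : ℝ) : ℂ) * 𝓕 f p) 2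
                  volume).toReal * (1 + t) ^ (-(1/4) : ℝ) := by
  have hd : finrank ℝ (EuclideanSpace ℝ (Fin 3)) < 4 := by simp
  set c : ℝ := ((2 * π : ℝ) ^ ((3:ℝ) / 2))⁻¹
  set I := ∫ q : EuclideanSpace ℝ (Fin 3), ((1 + ‖q‖ ^ 2) ^ 2)⁻¹
  have hI := integral_inv_one_add_norm_sq_sq_pos volume hd
  refine ⟨c * min lam 1 ^ (-(1/4) : ℝ) * √I, by positivity, fun f _ hg =>
    ⟨(continuousOn_integral_div_norm_sq_add_add hd hlam hg).const_smul c, fun t ht => ?_⟩⟩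
  have hbound := norm_integral_div_norm_sq_add_add_le hd hlam ht hg
  rw [finrank_euclideanSpace_fin, show ((3 : ℕ) : ℝ) / 4 - 1 = -(1 / 4) by norm_num] at hbound
  rw [norm_smul, norm_of_nonneg (by positivity)]
  simpa only [mul_assoc] using mul_le_mul_of_nonneg_left hbound (by positivity : 0 ≤ c)

/-- For `f ∈ L²(ℝ³)` with `(|p|²+λ)^{s/2} f̂ ∈ L²(ℝ³)`, the function
`c(t) = (2π)^{-3/2} ∫ (|p|²+λ)^{s/2} f̂(p)/(|p|²+λ+t) dp` is continuous on `[0,∞)` and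
satisfies `|c(t)| ≤ C ‖(|p|²+λ)^{s/2} f̂‖₂ (1+t)^{-1/4}` with `C` independent of `f, t`. -/
theorem c_continuous_and_bound (lam s : ℝ) (hlam : 0 < lam) (hs : s ∈ Set.Ioo (0:ℝ) 2) :
    ∃ C > 0, ∀ f : EuclideanSpace ℝ (Fin 3) → ℂ,
      MemLp f 2 volume →
      MemLp (fun p => (((‖p‖ ^ 2 + lam) ^ (s / 2) : ℝ) : ℂ) * 𝓕 f p) 2 volume →
      ContinuousOn (fun t : ℝ =>
          (((2 * π : ℝ) ^ ((3:ℝ) / 2))⁻¹ : ℝ) •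
            ∫ p : EuclideanSpace ℝ (Fin 3),
              (((‖p‖ ^ 2 + lam) ^ (s / 2) : ℝ) : ℂ) * 𝓕 f p
                / ((‖p‖ ^ 2 + lam + t : ℝ) : ℂ)) (Set.Ici 0) ∧
      ∀ t : ℝ, 0 ≤ t →
        ‖(((2 * π : ℝ) ^ ((3:ℝ) / 2))⁻¹ : ℝ) •
            ∫ p : EuclideanSpace ℝ (Fin 3),
              (((‖p‖ ^ 2 + lam) ^ (s / 2) : ℝ) : ℂ) * 𝓕 f p
                / ((‖p‖ ^ 2 + lam + t : ℝ) : ℂ)‖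
          ≤ C * (eLpNorm (fun p => (((‖p‖ ^ 2 + lam) ^ (s / 2) : ℝ) : ℂ) * 𝓕 f p) 2
                  volume).toReal * (1 + t) ^ (-(1/4) : ℝ) :=
  c_continuous_and_bound_general lam s hlam
end

section
/- For s ≥ 0, 1 − L(s) = (2/π) arctan(√s) + (1/π) ln((1+√s)²/(1+s)), this function is strictly increasing on [0,∞), tends to 1 as s → ∞, and satisfies 1 − L(s) ≤ (4/π)√s for 0 ≤ s ≤ 2. -/
/-! The integrand is the derivative of
`G s = arctan √s + log (1 + √s) - log (1 + s) / 2` (`lPrimitive` below) on `(0, ∞)`, and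
`G s → π / 2` as `s → ∞`, so `1 - L s = (2 / π) G s`. Monotonicity follows from the positivity of the integrand, and the
bound from `arctan x ≤ x`, `log (1 + x) ≤ x` and `log (1 + s) ≥ 0`. -/

open Real MeasureTheory Set Filter Topology

lemma Real.arctan_le_self_of_nonneg {x : ℝ} (hx : 0 ≤ x) : arctan x ≤ x := by
  simpa only [tan_arctan] using le_tan (arctan_nonneg.2 hx) (arctan_lt_pi_div_two x)

lemma tendsto_sqrt_div_one_add_atTop : Tendsto (fun s => √s / (1 + s)) atTop (𝓝 0) := by
  have h_upper : Tendsto (fun s => (√s)⁻¹) atTop (𝓝 0) :=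
    tendsto_inv_atTop_zero.comp tendsto_sqrt_atTop
  refine tendsto_of_tendsto_of_tendsto_of_le_of_le' tendsto_const_nhds h_upper ?_ ?_
  · filter_upwards [eventually_ge_atTop 0] with s hs
    positivity
  · filter_upwards [eventually_gt_atTop 0] with s hs
    rw [div_le_iff₀ (by positivity), ← div_eq_inv_mul, le_div_iff₀ (sqrt_pos.2 hs),
      mul_self_sqrt hs.le]
    linarith

noncomputable def lPrimitive (s : ℝ) : ℝ :=
  arctan √s + log (1 + √s) - log (1 + s) / 2

lemma lPrimitive_eq_arctan_add_log {s : ℝ} (hs : 0 ≤ s) :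
    lPrimitive s = arctan √s + (1 / 2) * log ((1 + √s) ^ 2 / (1 + s)) := by
  rw [lPrimitive, log_div (by positivity) (by positivity), log_pow]
  ring

lemma hasDerivAt_lPrimitive {x : ℝ} (hx : 0 < x) :
    HasDerivAt lPrimitive (1 / ((1 + x) * (1 + √x) * √x)) x := by
  have hsqrt : HasDerivAt (√·) (1 / (2 * √x)) x := hasDerivAt_sqrt hx.ne'
  have h_arctan := (hasDerivAt_arctan √x).comp x hsqrt
  have h_log_sqrt := (hasDerivAt_log (by positivity)).comp x (hsqrt.const_add 1)
  have h_log := (hasDerivAt_log (by positivity)).comp x ((hasDerivAt_id x).const_add 1)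
  refine ((h_arctan.add h_log_sqrt).sub (h_log.div_const 2)).congr_deriv ?_
  have ht : 0 < √x := sqrt_pos.2 hx
  set t := √x
  rw [id, show x = t ^ 2 from (sq_sqrt hx.le).symm]
  field_simp
  ring

lemma continuousOn_lPrimitive : ContinuousOn lPrimitive (Ici 0) := by
  have h_arctan : Continuous fun s => arctan √s := continuous_arctan.comp continuous_sqrt
  have h_log_sqrt : Continuous fun s => log (1 + √s) :=
    (continuous_const.add continuous_sqrt).log fun s =>
      (add_pos_of_pos_of_nonneg one_pos (sqrt_nonneg s)).ne'
  have h_log : ContinuousOn (fun s => log (1 + s)) (Ici 0) :=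
    (continuous_const.add continuous_id).continuousOn.log fun s hs =>
      (add_pos_of_pos_of_nonneg one_pos hs).ne'
  exact (h_arctan.add h_log_sqrt).continuousOn.sub (h_log.div_const 2)

lemma strictMonoOn_lPrimitive : StrictMonoOn lPrimitive (Ici 0) := by
  refine strictMonoOn_of_deriv_pos (convex_Ici 0) continuousOn_lPrimitive fun x hx => ?_
  rw [interior_Ici] at hx
  have hx : 0 < x := hx
  rw [(hasDerivAt_lPrimitive hx).deriv]
  have := sqrt_pos.2 hx
  positivity

lemma tendsto_lPrimitive_atTop : Tendsto lPrimitive atTop (𝓝 (π / 2)) := by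
  have h_arctan : Tendsto (fun s => arctan √s) atTop (𝓝 (π / 2)) :=
    (tendsto_arctan_atTop.mono_right nhdsWithin_le_nhds).comp tendsto_sqrt_atTop
  have h_ratio : Tendsto (fun s => (1 + √s) ^ 2 / (1 + s)) atTop (𝓝 1) := by
    have h := tendsto_const_nhds (x := (1 : ℝ)).add
      (tendsto_sqrt_div_one_add_atTop.const_mul 2)
    rw [mul_zero, add_zero] at h
    refine h.congr' ?_
    filter_upwards [eventually_ge_atTop 0] with s hs
    have h_one_add : 1 + s ≠ 0 := by positivity
    field_simp
    rw [add_sq, sq_sqrt hs]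
    ring
  have h_log : Tendsto (fun s => (1 / 2) * log ((1 + √s) ^ 2 / (1 + s))) atTop (𝓝 0) := by
    simpa only [log_one, mul_zero] using (h_ratio.log one_ne_zero).const_mul (1 / 2)
  have h := h_arctan.add h_log
  rw [add_zero] at h
  refine h.congr' ?_
  filter_upwards [eventually_ge_atTop 0] with s hs
  exact (lPrimitive_eq_arctan_add_log hs).symm

lemma integral_Ioi_eq_pi_div_two_sub_lPrimitive {s : ℝ} (hs : 0 ≤ s) :
    ∫ r in Ioi s, 1 / ((1 + r) * (1 + √r) * √r) = π / 2 - lPrimitive s := by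
  refine integral_Ioi_of_hasDerivAt_of_nonneg
    ((continuousOn_lPrimitive.continuousWithinAt hs).mono (Ici_subset_Ici.2 hs))
    (fun x hx => hasDerivAt_lPrimitive (hs.trans_lt hx)) (fun x hx => ?_) tendsto_lPrimitive_atTop
  have := sqrt_nonneg x
  have : 0 ≤ x := hs.trans hx.le
  positivity

lemma lPrimitive_le_two_mul_sqrt {s : ℝ} (hs : 0 ≤ s) : lPrimitive s ≤ 2 * √s := by
  have h_arctan := arctan_le_self_of_nonneg (sqrt_nonneg s)
  have h_log_sqrt : log (1 + √s) ≤ √s := by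
    linarith [log_le_sub_one_of_pos (show 0 < 1 + √s by positivity)]
  have h_log : 0 ≤ log (1 + s) := log_nonneg (by linarith)
  rw [lPrimitive]
  linarith

theorem one_sub_L_properties :
    let L : ℝ → ℝ := fun s =>
      (2 / π) * ∫ r in Set.Ioi s, 1 / ((1 + r) * (1 + Real.sqrt r) * Real.sqrt r)
    (∀ s : ℝ, 0 ≤ s →
        1 - L s = (2 / π) * Real.arctan (Real.sqrt s)
            + (1 / π) * Real.log ((1 + Real.sqrt s) ^ 2 / (1 + s))) ∧
    StrictMonoOn (fun s => 1 - L s) (Set.Ici 0) ∧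
    Tendsto (fun s => 1 - L s) atTop (nhds 1) ∧
    ∀ s : ℝ, s ∈ Set.Icc (0:ℝ) 2 → 1 - L s ≤ (4 / π) * Real.sqrt s := by
  intro L
  have one_sub_L_eq : ∀ s, 0 ≤ s → 1 - L s = (2 / π) * lPrimitive s := fun s hs => by
    simp only [L, integral_Ioi_eq_pi_div_two_sub_lPrimitive hs]
    field_simp
    ring
  refine ⟨fun s hs => ?_, ?_, ?_, fun s hs => ?_⟩
  · rw [one_sub_L_eq s hs, lPrimitive_eq_arctan_add_log hs]
    ring
  · exact ((strictMono_mul_left_of_pos (by positivity)).comp_strictMonoOn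
      strictMonoOn_lPrimitive).congr fun s hs => (one_sub_L_eq s hs).symm
  · have h := tendsto_lPrimitive_atTop.const_mul (2 / π)
    rw [show 2 / π * (π / 2) = 1 by field_simp] at h
    refine h.congr' ?_
    filter_upwards [eventually_ge_atTop 0] with s hs
    exact (one_sub_L_eq s hs).symm
  · rw [one_sub_L_eq s hs.1]
    calc 2 / π * lPrimitive s ≤ 2 / π * (2 * √s) := by
          gcongr
          exact lPrimitive_le_two_mul_sqrt hs.1
      _ = 4 / π * √s := by ring
end
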